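/- arXiv:2407.01802 — 5 statements merged into one kernel-verified Lean document; each statement's English description precedes it below -/
import Mathlib

section
/- A matrix with entries in {-1, 1} of rank r (over the reals) has at most 2^r distinct rows. -/
/-- A matrix with entries in `{-1, 1}` of rank `r` over `ℝ` has at most `2^r` distinct rows. -/
theorem pm_one_matrix_distinct_rows {m n r : ℕ} (M : Matrix (Fin m) (Fin n) ℝ)
    (hM : ∀ i j, M i j = 1 ∨ M i j = -1) (hr : M.rank = r) :
    (Finset.univ.image (fun i => M i)).card ≤ 2 ^ r := by
  classical
  obtain ⟨b, hbsub, hbspan, hbind⟩ := exists_linearIndependent ℝ (Set.range M.transpose)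
  have hbfin : b.Finite := (Set.finite_range M.transpose).subset hbsub
  haveI : Fintype b := hbfin.fintype
  have hcard : Fintype.card b = r := by
    have := finrank_span_set_eq_card hbind
    rw [hbspan, show Set.range M.transpose = Set.range M.col from rfl,
      ← Matrix.rank_eq_finrank_span_cols, hr, Set.toFinset_card] at this
    omega
  -- key: rows agreeing on all columns of `b` are equal
  have key : ∀ i i' : Fin m, (∀ c : b, (c : Fin m → ℝ) i = (c : Fin m → ℝ) i') →
      M i = M i' := by
    intro i i' h
    funext j
    let φ : (Fin m → ℝ) →ₗ[ℝ] ℝ :=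
      (LinearMap.proj i : (Fin m → ℝ) →ₗ[ℝ] ℝ) - LinearMap.proj i'
    have hker : Submodule.span ℝ b ≤ LinearMap.ker φ := by
      rw [Submodule.span_le]
      intro x hx
      have := h ⟨x, hx⟩
      simp only [SetLike.mem_coe, LinearMap.mem_ker, φ, LinearMap.sub_apply,
        LinearMap.proj_apply]
      simpa [sub_eq_zero] using this
    have hmem : M.transpose j ∈ Submodule.span ℝ b := by
      rw [hbspan]; exact Submodule.subset_span ⟨j, rfl⟩
    have : φ (M.transpose j) = 0 := hker hmem
    have : M.transpose j i - M.transpose j i' = 0 := by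
      simpa [φ, LinearMap.sub_apply, LinearMap.proj_apply] using this
    simpa [Matrix.transpose_apply, sub_eq_zero] using this
  rcases Nat.eq_zero_or_pos m with hm | hm
  · subst hm
    simp
  haveI : NeZero m := ⟨by omega⟩
  set s := Finset.univ.image (fun i => M i) with hs
  have hpick : ∀ v : Fin n → ℝ, ∃ i : Fin m, v ∈ s → M i = v := by
    intro v
    by_cases hv : v ∈ s
    · obtain ⟨i, _, hi⟩ := Finset.mem_image.mp hv
      exact ⟨i, fun _ => hi⟩
    · exact ⟨0, fun h => absurd h hv⟩
  choose g hg using hpick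
  -- sign pattern map
  let F : Fin m → (b → Bool) := fun i c => decide ((c : Fin m → ℝ) i = 1)
  have hpm : ∀ (c : b) (i : Fin m), (c : Fin m → ℝ) i = 1 ∨ (c : Fin m → ℝ) i = -1 := by
    intro c i
    obtain ⟨j, hj⟩ := hbsub c.2
    rw [← hj]
    exact hM i j
  have hinj : Set.InjOn (fun v => F (g v)) s := by
    intro v hv w hw h
    rw [← hg v hv, ← hg w hw]
    apply key
    intro c
    have hc := congrFun h c
    simp only [F, decide_eq_decide] at hc
    rcases hpm c (g v) with h1 | h1 <;> rcases hpm c (g w) with h2 | h2 <;>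
      rw [h1, h2] at hc ⊢ <;> simp_all
  calc s.card ≤ (Finset.univ : Finset (b → Bool)).card :=
        Finset.card_le_card_of_injOn _ (fun a _ => Finset.mem_univ _) hinj
    _ = 2 ^ r := by
        rw [Finset.card_univ, Fintype.card_fun, Fintype.card_bool, hcard]
end

section
/- If R is a rank-one block in the top-left of a matrix M = [[R, A], [B, Z]], then rk(M) ≥ rk([R A]) + rk([R; B]) − 3, where [R A] is the top row of blocks and [R; B] is the left column of blocks. -/
open Matrix Module

set_option synthInstance.maxHeartbeats 1000000
set_option maxHeartbeats 1000000
set_option linter.unusedSectionVars false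

section Aux

variable {K : Type*} [Field K] {m m₁ m₂ n n₁ n₂ : Type*}
  [Fintype m] [Fintype m₁] [Fintype m₂] [Fintype n] [Fintype n₁] [Fintype n₂]
  [DecidableEq m] [DecidableEq m₁] [DecidableEq m₂]
  [DecidableEq n] [DecidableEq n₁] [DecidableEq n₂]

theorem matrix_rank_add_le (X Y : Matrix m n K) : (X + Y).rank ≤ X.rank + Y.rank := by
  classical
  unfold Matrix.rank
  rw [Matrix.mulVecLin_add]
  have h : LinearMap.range (X.mulVecLin + Y.mulVecLin)
      ≤ LinearMap.range X.mulVecLin ⊔ LinearMap.range Y.mulVecLin := by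
    rintro x ⟨v, rfl⟩
    exact Submodule.add_mem_sup ⟨v, rfl⟩ ⟨v, rfl⟩
  exact le_trans (Submodule.finrank_mono h)
    (Submodule.finrank_add_le_finrank_add_finrank _ _)

/-- Core inequality: `rk A + rk B ≤ rk [[0, A], [B, Z]]`. -/
theorem rank_A_add_rank_B_le (A : Matrix m₁ n₂ K) (B : Matrix m₂ n₁ K) (Z : Matrix m₂ n₂ K) :
    A.rank + B.rank ≤ (Matrix.fromBlocks 0 A B Z).rank := by
  classical
  set N : Matrix (m₁ ⊕ m₂) (n₁ ⊕ n₂) K := Matrix.fromBlocks 0 A B Z with hN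
  set P : Matrix m₁ (m₁ ⊕ m₂) K := Matrix.fromCols 1 0 with hP
  set S : Submodule K ((m₁ ⊕ m₂) → K) := LinearMap.range N.mulVecLin with hS
  set f : S →ₗ[K] (m₁ → K) := P.mulVecLin.comp S.subtype with hf
  -- rank-nullity on f
  have hrn : finrank K (LinearMap.range f) + finrank K (LinearMap.ker f) = finrank K S :=
    LinearMap.finrank_range_add_finrank_ker f
  -- the range of f is the range of [0 A]
  have hPN : P * N = Matrix.fromCols (0 : Matrix m₁ n₁ K) A := by
    rw [hP, hN, Matrix.fromCols_mul_fromBlocks]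
    simp
  have hcomp : (Matrix.fromCols (0 : Matrix m₁ n₁ K) A).mulVecLin = P.mulVecLin.comp N.mulVecLin := by
    rw [← hPN, Matrix.mulVecLin_mul]
  have hrange : LinearMap.range f = LinearMap.range (Matrix.fromCols (0 : Matrix m₁ n₁ K) A).mulVecLin := by
    rw [hf, LinearMap.range_comp, Submodule.range_subtype, hS, hcomp, LinearMap.range_comp]
  -- rank A ≤ finrank (range f)
  have hA : A.rank ≤ finrank K (LinearMap.range f) := by
    rw [hrange]
    have : (Matrix.fromCols (0 : Matrix m₁ n₁ K) A * Matrix.fromRows (0 : Matrix n₁ n₂ K) (1 : Matrix n₂ n₂ K)) = A := by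
      rw [Matrix.fromCols_mul_fromRows]; simp
    calc A.rank = (Matrix.fromCols (0 : Matrix m₁ n₁ K) A * Matrix.fromRows (0 : Matrix n₁ n₂ K) (1 : Matrix n₂ n₂ K)).rank := by
          rw [this]
      _ ≤ (Matrix.fromCols (0 : Matrix m₁ n₁ K) A).rank := Matrix.rank_mul_le_left _ _
  -- the submodule T = range [0; B] sits inside S and inside ker π
  set T : Submodule K ((m₁ ⊕ m₂) → K) :=
    LinearMap.range (Matrix.fromRows (0 : Matrix m₁ n₁ K) B).mulVecLin with hT
  have hNQ : N * Matrix.fromRows (1 : Matrix n₁ n₁ K) (0 : Matrix n₂ n₁ K) = Matrix.fromRows (0 : Matrix m₁ n₁ K) B := by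
    rw [hN, Matrix.fromBlocks_mul_fromRows]
    simp
  have hTS : T ≤ S := by
    rintro x ⟨v, rfl⟩
    have h : (N * Matrix.fromRows (1 : Matrix n₁ n₁ K) (0 : Matrix n₂ n₁ K)).mulVecLin v
        = (Matrix.fromRows (0 : Matrix m₁ n₁ K) B).mulVecLin v :=
      DFunLike.congr_fun (congrArg Matrix.mulVecLin hNQ) v
    simp only [Matrix.mulVecLin_mul, LinearMap.comp_apply] at h
    exact ⟨_, h⟩
  have hPT : P * Matrix.fromRows (0 : Matrix m₁ n₁ K) B = 0 := by
    rw [hP, Matrix.fromCols_mul_fromRows]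
    simp
  have hTker : ∀ x ∈ T, P.mulVecLin x = 0 := by
    rintro x ⟨v, rfl⟩
    have : (P.mulVecLin.comp (Matrix.fromRows (0 : Matrix m₁ n₁ K) B).mulVecLin) v = 0 := by
      rw [← Matrix.mulVecLin_mul, hPT, Matrix.mulVecLin_zero]
      rfl
    simpa using this
  -- rank B ≤ finrank (ker f)
  have hB : B.rank ≤ finrank K (LinearMap.ker f) := by
    have hBrank : B.rank ≤ finrank K T := by
      have : (Matrix.fromCols (0 : Matrix m₂ m₁ K) (1 : Matrix m₂ m₂ K) *
          Matrix.fromRows (0 : Matrix m₁ n₁ K) B) = B := by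
        rw [Matrix.fromCols_mul_fromRows]; simp
      calc B.rank = (Matrix.fromCols (0 : Matrix m₂ m₁ K) (1 : Matrix m₂ m₂ K) *
            Matrix.fromRows (0 : Matrix m₁ n₁ K) B).rank := by rw [this]
        _ ≤ (Matrix.fromRows (0 : Matrix m₁ n₁ K) B).rank := Matrix.rank_mul_le_right _ _
        _ = finrank K T := rfl
    have hT' : Submodule.comap S.subtype T ≤ LinearMap.ker f := by
      intro x hx
      have : (x : (m₁ ⊕ m₂) → K) ∈ T := hx
      simp only [hf, LinearMap.mem_ker, LinearMap.comp_apply, Submodule.subtype_apply]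
      exact hTker _ this
    have heq : finrank K T = finrank K (Submodule.comap S.subtype T) :=
      (LinearEquiv.finrank_eq (Submodule.comapSubtypeEquivOfLe hTS)).symm
    calc B.rank ≤ finrank K T := hBrank
      _ = finrank K (Submodule.comap S.subtype T) := heq
      _ ≤ finrank K (LinearMap.ker f) := Submodule.finrank_mono hT'
  calc A.rank + B.rank ≤ finrank K (LinearMap.range f) + finrank K (LinearMap.ker f) :=
        add_le_add hA hB
    _ = finrank K S := hrn
    _ = N.rank := rfl

theorem rank_fromCols_le (X : Matrix m n₁ K) (Y : Matrix m n₂ K) :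
    (Matrix.fromCols X Y).rank ≤ X.rank + Y.rank := by
  have h : Matrix.fromCols X Y =
      X * Matrix.fromCols (1 : Matrix n₁ n₁ K) (0 : Matrix n₁ n₂ K) + Y * Matrix.fromCols (0 : Matrix n₂ n₁ K) (1 : Matrix n₂ n₂ K) := by
    rw [Matrix.mul_fromCols, Matrix.mul_fromCols]
    ext i (j | j) <;> simp
  rw [h]
  exact le_trans (matrix_rank_add_le _ _)
    (add_le_add (Matrix.rank_mul_le_left _ _) (Matrix.rank_mul_le_left _ _))

theorem rank_fromRows_le (X : Matrix m₁ n K) (Y : Matrix m₂ n K) :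
    (Matrix.fromRows X Y).rank ≤ X.rank + Y.rank := by
  have h : Matrix.fromRows X Y =
      Matrix.fromRows (1 : Matrix m₁ m₁ K) (0 : Matrix m₂ m₁ K) * X + Matrix.fromRows (0 : Matrix m₁ m₂ K) (1 : Matrix m₂ m₂ K) * Y := by
    rw [Matrix.fromRows_mul, Matrix.fromRows_mul]
    ext (i | i) j <;> simp
  rw [h]
  exact le_trans (matrix_rank_add_le _ _)
    (add_le_add (Matrix.rank_mul_le_right _ _) (Matrix.rank_mul_le_right _ _))

theorem rank_fromBlocks_corner_le (R : Matrix m₁ n₁ K) :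
    (Matrix.fromBlocks R 0 0 (0 : Matrix m₂ n₂ K)).rank ≤ R.rank := by
  have h : Matrix.fromBlocks R 0 0 (0 : Matrix m₂ n₂ K) =
      Matrix.fromRows (1 : Matrix m₁ m₁ K) (0 : Matrix m₂ m₁ K) * (R * Matrix.fromCols (1 : Matrix n₁ n₁ K) (0 : Matrix n₁ n₂ K)) := by
    rw [Matrix.fromRows_mul, Matrix.mul_fromCols]
    ext (i | i) (j | j) <;> simp [Matrix.fromBlocks]
  rw [h]
  exact le_trans (Matrix.rank_mul_le_right _ _) (Matrix.rank_mul_le_left _ _)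

end Aux

/-- If `R` is a rank-one block in the top-left of `M = [[R, A], [B, Z]]`, then
`rk(M) ≥ rk([R A]) + rk([R; B]) − 3`. -/
theorem rank_fromBlocks_rank_one_ge {K : Type*} [Field K] {m₁ m₂ n₁ n₂ : ℕ}
    (R : Matrix (Fin m₁) (Fin n₁) K) (A : Matrix (Fin m₁) (Fin n₂) K)
    (B : Matrix (Fin m₂) (Fin n₁) K) (Z : Matrix (Fin m₂) (Fin n₂) K)
    (hR : R.rank ≤ 1) :
    (Matrix.fromCols R A).rank + (Matrix.fromRows R B).rank
      ≤ (Matrix.fromBlocks R A B Z).rank + 3 := by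
  have h1 : (Matrix.fromCols R A).rank ≤ R.rank + A.rank := rank_fromCols_le R A
  have h2 : (Matrix.fromRows R B).rank ≤ R.rank + B.rank := rank_fromRows_le R B
  have h3 : A.rank + B.rank ≤ (Matrix.fromBlocks (0 : Matrix (Fin m₁) (Fin n₁) K) A B Z).rank :=
    rank_A_add_rank_B_le A B Z
  have h4 : (Matrix.fromBlocks (0 : Matrix (Fin m₁) (Fin n₁) K) A B Z).rank
      ≤ (Matrix.fromBlocks R A B Z).rank + R.rank := by
    have hsplit : Matrix.fromBlocks (0 : Matrix (Fin m₁) (Fin n₁) K) A B Z =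
        Matrix.fromBlocks R A B Z + Matrix.fromBlocks (-R) 0 0 0 := by
      ext (i | i) (j | j) <;> simp [Matrix.fromBlocks]
    calc (Matrix.fromBlocks (0 : Matrix (Fin m₁) (Fin n₁) K) A B Z).rank
        = (Matrix.fromBlocks R A B Z + Matrix.fromBlocks (-R) 0 0 0).rank := by rw [hsplit]
      _ ≤ (Matrix.fromBlocks R A B Z).rank + (Matrix.fromBlocks (-R) 0 0 0).rank :=
          matrix_rank_add_le _ _
      _ ≤ (Matrix.fromBlocks R A B Z).rank + R.rank := by
          refine add_le_add_right (le_trans (rank_fromBlocks_corner_le (-R)) (le_of_eq ?_)) _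
          have hmv : (-R).mulVecLin = -R.mulVecLin := by
            ext v i
            simp [Matrix.mulVecLin_apply, Matrix.neg_mulVec]
          unfold Matrix.rank
          rw [hmv, LinearMap.range_neg]
  omega
end

section
/- If X = (X_1,...,X_n) and Y = (Y_1,...,Y_n) are independent random vectors, then H(X,Y) = Σ_{i=1}^n H(X_i, Y_i | X_{<i}, Y_{>i}). -/
open Finset Real
open scoped Classical

/-- The probability that the random variable `f` (on finite sample space `Ω` with
probability mass function `p`) takes the value `s`. -/
noncomputable def prob {Ω S : Type*} [Fintype Ω] (p : Ω → ℝ) (f : Ω → S) (s : S) : ℝ :=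
  ∑ ω ∈ univ.filter (fun ω => f ω = s), p ω

/-- Shannon entropy (base 2) of the random variable `f`. -/
noncomputable def ent {Ω S : Type*} [Fintype Ω] [Fintype S] (p : Ω → ℝ) (f : Ω → S) : ℝ :=
  ∑ s : S, prob p f s * logb 2 (1 / prob p f s)

/-- Conditional Shannon entropy `H(f | g) = H(f, g) - H(g)`. -/
noncomputable def condEnt {Ω S T : Type*} [Fintype Ω] [Fintype S] [Fintype T]
    (p : Ω → ℝ) (f : Ω → S) (g : Ω → T) : ℝ :=
  ent p (fun ω => (f ω, g ω)) - ent p g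

/-!
Independence of `X` and `Y` gives `H(X_i, Y_i, X_{<i}, Y_{>i}) = H(X_{≤i}) + H(Y_{≥i})` and
`H(X_{<i}, Y_{>i}) = H(X_{<i}) + H(Y_{>i})`, so the `i`-th conditional entropy is
`(H(X_{≤i}) - H(X_{<i})) + (H(Y_{≥i}) - H(Y_{>i}))`. Summed over `i`, both brackets telescope,
to `H(X)` and `H(Y)`, and `H(X) + H(Y) = H(X, Y)` by independence once more.
-/

section Entropy

variable {Ω S T A B : Type*} [Fintype Ω] (p : Ω → ℝ)

lemma sum_prob [Fintype S] (f : Ω → S) : ∑ s, prob p f s = ∑ ω, p ω := by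
  simp only [prob, sum_filter]
  rw [sum_comm]
  simp

lemma prob_eq_zero_of_forall_ne {f : Ω → S} {s : S} (h : ∀ ω, f ω ≠ s) : prob p f s = 0 := by
  simp [prob, h]

lemma prob_comp [Fintype S] (f : Ω → S) (g : S → T) (t : T) :
    prob p (fun ω => g (f ω)) t = ∑ s ∈ univ.filter (fun s => g s = t), prob p f s := by
  unfold prob
  rw [← sum_fiberwise_of_maps_to (g := f) (t := univ.filter (fun s => g s = t)) (by simp)]
  refine sum_congr rfl fun s hs => ?_
  rw [filter_filter]
  congr 1
  ext ω
  simp only [mem_filter, mem_univ, true_and] at hs ⊢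
  constructor
  · exact And.right
  · rintro rfl; exact ⟨hs, rfl⟩

lemma prob_comp_of_injective (f : Ω → S) {g : S → T} (hg : g.Injective) (s : S) :
    prob p (fun ω => g (f ω)) (g s) = prob p f s := by
  simp [prob, hg.eq_iff]

lemma ent_comp_of_injective [Fintype S] [Fintype T] (f : Ω → S) {g : S → T}
    (hg : g.Injective) : ent p (fun ω => g (f ω)) = ent p f := by
  refine (Fintype.sum_of_injective g hg _ _ (fun t ht => ?_) fun s => ?_).symm
  · rw [prob_eq_zero_of_forall_ne p fun ω h => ht ⟨f ω, h⟩, zero_mul]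
  · rw [prob_comp_of_injective p f hg]

lemma ent_eq_of_comp_of_comp [Fintype S] [Fintype T] {f : Ω → S} {g : Ω → T}
    (u : S → T) (v : T → S) (hg : ∀ ω, g ω = u (f ω)) (hf : ∀ ω, f ω = v (g ω)) :
    ent p f = ent p g :=
  calc ent p f = ent p (fun ω => (f ω, u (f ω))) :=
        (ent_comp_of_injective p f (g := fun s => (s, u s)) fun _ _ h => congrArg Prod.fst h).symm
    _ = ent p (fun ω => (v (g ω), g ω)) := by simp only [← hg, ← hf]
    _ = ent p g :=
        ent_comp_of_injective p g (g := fun t => (v t, t)) fun _ _ h => congrArg Prod.snd h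

variable {p}

lemma ent_of_subsingleton [Fintype S] [Subsingleton S] (hp1 : ∑ ω, p ω = 1) (f : Ω → S) :
    ent p f = 0 := by
  refine sum_eq_zero fun s _ => ?_
  have hs : prob p f s = 1 := by
    rw [prob, filter_true_of_mem fun ω _ => Subsingleton.elim _ _, hp1]
  simp [hs]

lemma ent_prod_of_indep [Fintype S] [Fintype T] (hp1 : ∑ ω, p ω = 1) (f : Ω → S) (g : Ω → T)
    (hind : ∀ s t, prob p (fun ω => (f ω, g ω)) (s, t) = prob p f s * prob p g t) :
    ent p (fun ω => (f ω, g ω)) = ent p f + ent p g := by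
  have hf1 : ∑ s, prob p f s = 1 := by rw [sum_prob, hp1]
  have hg1 : ∑ t, prob p g t = 1 := by rw [sum_prob, hp1]
  -- A zero factor kills the term on both sides (`1 / 0 = 0`); otherwise `logb` splits.
  have hterm : ∀ s t, prob p f s * prob p g t * logb 2 (1 / (prob p f s * prob p g t)) =
      prob p f s * logb 2 (1 / prob p f s) * prob p g t +
        prob p f s * (prob p g t * logb 2 (1 / prob p g t)) := by
    intro s t
    by_cases hs : prob p f s = 0
    · simp [hs]
    by_cases ht : prob p g t = 0
    · simp [ht]
    rw [one_div, one_div, one_div, mul_inv, logb_mul (inv_ne_zero hs) (inv_ne_zero ht)]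
    ring
  simp only [ent, Fintype.sum_prod_type, hind, hterm, sum_add_distrib, ← mul_sum, ← sum_mul,
    hf1, hg1, mul_one, one_mul]

lemma prob_prod_comp_of_indep [Fintype A] [Fintype B] {f : Ω → A} {g : Ω → B}
    (hind : ∀ a b, prob p (fun ω => (f ω, g ω)) (a, b) = prob p f a * prob p g b)
    (u : A → S) (v : B → T) (s : S) (t : T) :
    prob p (fun ω => (u (f ω), v (g ω))) (s, t) =
      prob p (fun ω => u (f ω)) s * prob p (fun ω => v (g ω)) t := by
  rw [prob_comp p (fun ω => (f ω, g ω)) (fun ab => (u ab.1, v ab.2)), prob_comp p f u,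
    prob_comp p g v, sum_mul_sum, ← univ_product_univ]
  simp only [Prod.mk.injEq, sum_filter, sum_product, ite_and, hind, sum_ite_irrel, sum_const_zero]

lemma ent_prod_comp_of_indep [Fintype A] [Fintype B] [Fintype S] [Fintype T]
    (hp1 : ∑ ω, p ω = 1) {f : Ω → A} {g : Ω → B}
    (hind : ∀ a b, prob p (fun ω => (f ω, g ω)) (a, b) = prob p f a * prob p g b)
    (u : A → S) (v : B → T) :
    ent p (fun ω => (u (f ω), v (g ω))) = ent p (fun ω => u (f ω)) + ent p (fun ω => v (g ω)) :=
  ent_prod_of_indep hp1 _ _ (prob_prod_comp_of_indep hind u v)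

end Entropy

section Restrict

variable {Ω ι α : Type*} [Fintype Ω] [Fintype ι] [DecidableEq ι] [Fintype α]
  {p : Ω → ℝ} (Z : Ω → ι → α) {P Q : ι → Prop} [DecidablePred P] [DecidablePred Q]

lemma ent_restrict_congr (h : ∀ j, P j ↔ Q j) :
    ent p (fun ω (j : {j // P j}) => Z ω j) = ent p (fun ω (j : {j // Q j}) => Z ω j) :=
  ent_eq_of_comp_of_comp p (fun a j => a ⟨j, (h j).2 j.2⟩) (fun b j => b ⟨j, (h j).1 j.2⟩)
    (fun _ => rfl) (fun _ => rfl)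

lemma ent_restrict_of_forall (h : ∀ j, P j) :
    ent p (fun ω (j : {j // P j}) => Z ω j) = ent p Z :=
  ent_eq_of_comp_of_comp p (fun a j => a ⟨j, h j⟩) (fun z j => z j) (fun _ => rfl) (fun _ => rfl)

lemma ent_restrict_of_forall_not (hp1 : ∑ ω, p ω = 1) (h : ∀ j, ¬P j) :
    ent p (fun ω (j : {j // P j}) => Z ω j) = 0 :=
  have : IsEmpty {j // P j} := ⟨fun j => h j j.2⟩
  ent_of_subsingleton hp1 _

lemma ent_restrict_of_iff_eq_or (i : ι) (h : ∀ j, P j ↔ j = i ∨ Q j) :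
    ent p (fun ω (j : {j // P j}) => Z ω j) =
      ent p (fun ω => (Z ω i, fun j : {j // Q j} => Z ω j)) := by
  refine ent_eq_of_comp_of_comp p
    (fun a => (a ⟨i, (h i).2 (.inl rfl)⟩, fun j => a ⟨j, (h j).2 (.inr j.2)⟩))
    (fun b j => if hj : j.1 = i then b.1 else b.2 ⟨j, ((h j).1 j.2).resolve_left hj⟩)
    (fun _ => rfl) (fun ω => funext fun j => ?_)
  by_cases hj : j.1 = i
  · subst hj; simp
  · simp [hj]

end Restrict

section Chain

variable {Ω α : Type*} [Fintype Ω] [Fintype α] {n : ℕ} (p : Ω → ℝ) (Z : Ω → Fin n → α)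

noncomputable def entPrefix (k : ℕ) : ℝ :=
  ent p (fun ω (j : {j : Fin n // (j : ℕ) < k}) => Z ω j)

noncomputable def entSuffix (k : ℕ) : ℝ :=
  ent p (fun ω (j : {j : Fin n // k ≤ (j : ℕ)}) => Z ω j)

variable {p}

lemma entPrefix_zero (hp1 : ∑ ω, p ω = 1) : entPrefix p Z 0 = 0 :=
  ent_restrict_of_forall_not Z hp1 fun _ => Nat.not_lt_zero _

lemma entPrefix_self : entPrefix p Z n = ent p Z :=
  ent_restrict_of_forall Z Fin.isLt

lemma entSuffix_zero : entSuffix p Z 0 = ent p Z :=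
  ent_restrict_of_forall Z fun _ => Nat.zero_le _

lemma entSuffix_self (hp1 : ∑ ω, p ω = 1) : entSuffix p Z n = 0 :=
  ent_restrict_of_forall_not Z hp1 fun j => not_le.2 j.isLt

lemma entPrefix_coe_succ (i : Fin n) :
    entPrefix p Z (i + 1) = ent p (fun ω => (Z ω i, fun j : {j : Fin n // j < i} => Z ω j)) :=
  ent_restrict_of_iff_eq_or Z i fun j => by
    rw [Nat.lt_succ_iff_lt_or_eq, Fin.lt_def, Fin.ext_iff]; tauto

lemma entPrefix_coe (i : Fin n) :
    entPrefix p Z i = ent p (fun ω (j : {j : Fin n // j < i}) => Z ω j) :=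
  ent_restrict_congr Z fun _ => Fin.lt_def.symm

lemma entSuffix_coe (i : Fin n) :
    entSuffix p Z i = ent p (fun ω => (Z ω i, fun j : {j : Fin n // i < j} => Z ω j)) :=
  ent_restrict_of_iff_eq_or Z i fun j => by rw [le_iff_eq_or_lt, Fin.lt_def, Fin.ext_iff]; tauto

lemma entSuffix_coe_succ (i : Fin n) :
    entSuffix p Z (i + 1) = ent p (fun ω (j : {j : Fin n // i < j}) => Z ω j) :=
  ent_restrict_congr Z fun _ => Fin.lt_def.symm

end Chain

section Coordinate

variable {Ω 𝒳 𝒴 : Type*} [Fintype Ω] [Fintype 𝒳] [Fintype 𝒴] {n : ℕ} {p : Ω → ℝ}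
  {X : Ω → Fin n → 𝒳} {Y : Ω → Fin n → 𝒴}

lemma condEnt_coord_eq_entPrefix_add_entSuffix (hp1 : ∑ ω, p ω = 1)
    (hind : ∀ x y, prob p (fun ω => (X ω, Y ω)) (x, y) = prob p X x * prob p Y y) (i : Fin n) :
    condEnt p (fun ω => (X ω i, Y ω i))
        (fun ω => ((fun j : {j : Fin n // j < i} => X ω j.1),
                   (fun j : {j : Fin n // i < j} => Y ω j.1))) =
      (entPrefix p X (i + 1) - entPrefix p X i) + (entSuffix p Y i - entSuffix p Y (i + 1)) := by
  have hjoint : ent p (fun ω => ((X ω i, Y ω i),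
      ((fun j : {j : Fin n // j < i} => X ω j.1), (fun j : {j : Fin n // i < j} => Y ω j.1)))) =
      entPrefix p X (i + 1) + entSuffix p Y i := by
    rw [entPrefix_coe_succ, entSuffix_coe, ← ent_prod_comp_of_indep hp1 hind
      (fun x => (x i, fun j : {j : Fin n // j < i} => x j.1))
      (fun y => (y i, fun j : {j : Fin n // i < j} => y j.1))]
    exact ent_eq_of_comp_of_comp p (fun q => ((q.1.1, q.2.1), (q.1.2, q.2.2)))
      (fun q => ((q.1.1, q.2.1), (q.1.2, q.2.2))) (fun _ => rfl) (fun _ => rfl)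
  have hcond : ent p (fun ω =>
      ((fun j : {j : Fin n // j < i} => X ω j.1), (fun j : {j : Fin n // i < j} => Y ω j.1))) =
      entPrefix p X i + entSuffix p Y (i + 1) := by
    rw [entPrefix_coe, entSuffix_coe_succ]
    exact ent_prod_comp_of_indep hp1 hind (fun x (j : {j : Fin n // j < i}) => x j.1)
      (fun y (j : {j : Fin n // i < j}) => y j.1)
  rw [condEnt, hjoint, hcond]
  ring

end Coordinate

theorem entropy_eq_sum_cond_entropy_general {Ω 𝒳 𝒴 : Type*} [Fintype Ω] [Fintype 𝒳] [Fintype 𝒴]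
    {n : ℕ} (p : Ω → ℝ) (hp1 : ∑ ω, p ω = 1)
    (X : Ω → Fin n → 𝒳) (Y : Ω → Fin n → 𝒴)
    (hind : ∀ x y, prob p (fun ω => (X ω, Y ω)) (x, y) = prob p X x * prob p Y y) :
    ent p (fun ω => (X ω, Y ω)) =
      ∑ i : Fin n,
        condEnt p (fun ω => (X ω i, Y ω i))
          (fun ω => ((fun j : {j : Fin n // j < i} => X ω j.1),
                     (fun j : {j : Fin n // i < j} => Y ω j.1))) := by
  rw [sum_congr rfl fun i _ => condEnt_coord_eq_entPrefix_add_entSuffix hp1 hind i, sum_add_distrib,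
    Fin.sum_univ_eq_sum_range (fun k => entPrefix p X (k + 1) - entPrefix p X k),
    Fin.sum_univ_eq_sum_range (fun k => entSuffix p Y k - entSuffix p Y (k + 1)),
    sum_range_sub, sum_range_sub', entPrefix_self, entPrefix_zero X hp1, entSuffix_zero,
    entSuffix_self Y hp1, sub_zero, sub_zero]
  exact ent_prod_of_indep hp1 X Y hind

/-- If `X = (X_1,...,X_n)` and `Y = (Y_1,...,Y_n)` are independent random vectors, then
`H(X, Y) = Σ_{i=1}^n H(X_i, Y_i | X_{<i}, Y_{>i})`. -/
theorem entropy_eq_sum_cond_entropy {Ω 𝒳 𝒴 : Type*} [Fintype Ω] [Fintype 𝒳] [Fintype 𝒴]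
    {n : ℕ} (p : Ω → ℝ) (hp0 : ∀ ω, 0 ≤ p ω) (hp1 : ∑ ω, p ω = 1)
    (X : Ω → Fin n → 𝒳) (Y : Ω → Fin n → 𝒴)
    (hind : ∀ x y, prob p (fun ω => (X ω, Y ω)) (x, y) = prob p X x * prob p Y y) :
    ent p (fun ω => (X ω, Y ω)) =
      ∑ i : Fin n,
        condEnt p (fun ω => (X ω i, Y ω i))
          (fun ω => ((fun j : {j : Fin n // j < i} => X ω j.1),
                     (fun j : {j : Fin n // i < j} => Y ω j.1))) :=
  entropy_eq_sum_cond_entropy_general p hp1 X Y hind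
end

section
/- If f^{⊕n} has a monochromatic rectangle of size 2^k, then f has a monochromatic rectangle of size at least 2^{k/n − 2}. -/
open Finset Real

namespace XorLiftProof

lemma zmod_not_eq_zero_iff (a : ZMod 2) : ¬ a = 0 ↔ a = 1 := by revert a; decide

/-- Cauchy–Schwarz style auxiliary bound. -/
lemma cs_aux {ι : Type*} (F : Finset ι) (x X : ι → ℝ) (t : ℝ)
    (hx : ∀ r ∈ F, 0 ≤ x r) (hX : ∀ r ∈ F, 0 ≤ X r)
    (ht : ∀ r ∈ F, x r * X r ≤ t) (ht0 : 0 ≤ t) :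
    (∑ r ∈ F, x r * X r) ^ 2 ≤ t * ((∑ r ∈ F, x r) * (∑ r ∈ F, X r)) := by
  have h1 : ∑ r ∈ F, x r * X r ≤ Real.sqrt t * ∑ r ∈ F, Real.sqrt (x r) * Real.sqrt (X r) := by
    rw [Finset.mul_sum]
    refine Finset.sum_le_sum fun r hr => ?_
    have hxr := hx r hr
    have hXr := hX r hr
    have hs : Real.sqrt (x r) * Real.sqrt (X r) = Real.sqrt (x r * X r) :=
      (Real.sqrt_mul hxr _).symm
    rw [hs]
    have h2 : Real.sqrt (x r * X r) ≤ Real.sqrt t := Real.sqrt_le_sqrt (ht r hr)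
    have h3 : Real.sqrt (x r * X r) * Real.sqrt (x r * X r) = x r * X r :=
      Real.mul_self_sqrt (mul_nonneg hxr hXr)
    nlinarith [Real.sqrt_nonneg (x r * X r)]
  have h4 : (∑ r ∈ F, Real.sqrt (x r) * Real.sqrt (X r)) ^ 2 ≤
      (∑ r ∈ F, x r) * (∑ r ∈ F, X r) := by
    calc (∑ r ∈ F, Real.sqrt (x r) * Real.sqrt (X r)) ^ 2
        ≤ (∑ r ∈ F, Real.sqrt (x r) ^ 2) * ∑ r ∈ F, Real.sqrt (X r) ^ 2 :=
          Finset.sum_mul_sq_le_sq_mul_sq F _ _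
      _ = (∑ r ∈ F, x r) * (∑ r ∈ F, X r) := by
          rw [Finset.sum_congr rfl fun r hr => Real.sq_sqrt (hx r hr),
              Finset.sum_congr rfl fun r hr => Real.sq_sqrt (hX r hr)]
  have h5 : 0 ≤ ∑ r ∈ F, x r * X r :=
    Finset.sum_nonneg fun r hr => mul_nonneg (hx r hr) (hX r hr)
  calc (∑ r ∈ F, x r * X r) ^ 2
      ≤ (Real.sqrt t * ∑ r ∈ F, Real.sqrt (x r) * Real.sqrt (X r)) ^ 2 :=
        pow_le_pow_left₀ h5 h1 2
    _ = t * (∑ r ∈ F, Real.sqrt (x r) * Real.sqrt (X r)) ^ 2 := by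
        rw [mul_pow, Real.sq_sqrt ht0]
    _ ≤ t * ((∑ r ∈ F, x r) * (∑ r ∈ F, X r)) := mul_le_mul_of_nonneg_left h4 ht0

lemma abstract_bound {ι κ : Type*} (R : Finset ι) (Dd : Finset κ) (m : ι → κ → ZMod 2)
    (x X : ι → ℝ) (y Y : κ → ℝ) (K M : ℝ)
    (hx : ∀ r ∈ R, 0 ≤ x r) (hX : ∀ r ∈ R, 0 ≤ X r)
    (hy : ∀ d ∈ Dd, 0 ≤ y d) (hY : ∀ d ∈ Dd, 0 ≤ Y d)
    (hK0 : 0 ≤ K) (hM0 : 0 ≤ M)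
    (hrowK : ∀ d ∈ Dd, ∀ ε : ZMod 2, (∑ r ∈ R.filter (fun r => m r d = ε), x r) * y d ≤ K)
    (hrowM : ∀ d ∈ Dd, ∀ ε : ZMod 2, (∑ r ∈ R.filter (fun r => m r d = ε), X r) * Y d ≤ M)
    (hcolK : ∀ r ∈ R, ∀ ε : ZMod 2, x r * (∑ d ∈ Dd.filter (fun d => m r d = ε), y d) ≤ K)
    (hcolM : ∀ r ∈ R, ∀ ε : ZMod 2, X r * (∑ d ∈ Dd.filter (fun d => m r d = ε), Y d) ≤ M) :
    (∑ r ∈ R, x r * X r) * (∑ d ∈ Dd, y d * Y d) ≤ 4 * (K * M) := by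
  classical
  set P := ∑ r ∈ R, x r * X r with hP
  set Q := ∑ d ∈ Dd, y d * Y d with hQ
  have hP0 : 0 ≤ P := Finset.sum_nonneg fun r hr => mul_nonneg (hx r hr) (hX r hr)
  have hQ0 : 0 ≤ Q := Finset.sum_nonneg fun d hd => mul_nonneg (hy d hd) (hY d hd)
  rcases R.eq_empty_or_nonempty with hR | hR
  · have : P = 0 := by simp [hP, hR]
    rw [this, zero_mul]; positivity
  rcases Dd.eq_empty_or_nonempty with hD | hD
  · have : Q = 0 := by simp [hQ, hD]
    rw [this, mul_zero]; positivity
  obtain ⟨r0, hr0, hrmax⟩ := R.exists_max_image (fun r => x r * X r) hR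
  obtain ⟨d0, hd0, hdmax⟩ := Dd.exists_max_image (fun d => y d * Y d) hD
  by_cases htm : x r0 * X r0 ≤ 0
  · have h1 : P ≤ 0 := Finset.sum_nonpos fun r hr => le_trans (hrmax r hr) htm
    rw [le_antisymm h1 hP0, zero_mul]; positivity
  by_cases hsm : y d0 * Y d0 ≤ 0
  · have h1 : Q ≤ 0 := Finset.sum_nonpos fun d hd => le_trans (hdmax d hd) hsm
    rw [le_antisymm h1 hQ0, mul_zero]; positivity
  push_neg at htm hsm
  have hx0 : 0 < x r0 := by
    rcases (hx r0 hr0).lt_or_eq with h | h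
    · exact h
    · exfalso; rw [← h, zero_mul] at htm; exact lt_irrefl 0 htm
  have hX0 : 0 < X r0 := by
    rcases (hX r0 hr0).lt_or_eq with h | h
    · exact h
    · exfalso; rw [← h, mul_zero] at htm; exact lt_irrefl 0 htm
  have hy0 : 0 < y d0 := by
    rcases (hy d0 hd0).lt_or_eq with h | h
    · exact h
    · exfalso; rw [← h, zero_mul] at hsm; exact lt_irrefl 0 hsm
  have hY0 : 0 < Y d0 := by
    rcases (hY d0 hd0).lt_or_eq with h | h
    · exact h
    · exfalso; rw [← h, mul_zero] at hsm; exact lt_irrefl 0 hsm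
  have hpieceP : ∀ ε : ZMod 2, (∑ r ∈ R.filter (fun r => m r d0 = ε), x r * X r) ^ 2
      ≤ x r0 * X r0 * (K * M) / (y d0 * Y d0) := by
    intro ε
    have hsub := Finset.filter_subset (fun r => m r d0 = ε) R
    have h1 := cs_aux (R.filter (fun r => m r d0 = ε)) x X (x r0 * X r0)
      (fun r hr => hx r (hsub hr)) (fun r hr => hX r (hsub hr))
      (fun r hr => hrmax r (hsub hr)) (le_of_lt htm)
    have h2 : (∑ r ∈ R.filter (fun r => m r d0 = ε), x r) ≤ K / y d0 :=
      (le_div_iff₀ hy0).2 (hrowK d0 hd0 ε)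
    have h3 : (∑ r ∈ R.filter (fun r => m r d0 = ε), X r) ≤ M / Y d0 :=
      (le_div_iff₀ hY0).2 (hrowM d0 hd0 ε)
    have hxs : 0 ≤ ∑ r ∈ R.filter (fun r => m r d0 = ε), x r :=
      Finset.sum_nonneg fun r hr => hx r (hsub hr)
    calc (∑ r ∈ R.filter (fun r => m r d0 = ε), x r * X r) ^ 2
        ≤ x r0 * X r0 * ((∑ r ∈ R.filter (fun r => m r d0 = ε), x r)
            * ∑ r ∈ R.filter (fun r => m r d0 = ε), X r) := h1
      _ ≤ x r0 * X r0 * (K / y d0 * (M / Y d0)) := by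
          refine mul_le_mul_of_nonneg_left ?_ (le_of_lt htm)
          exact mul_le_mul h2 h3 (Finset.sum_nonneg fun r hr => hX r (hsub hr)) (by positivity)
      _ = x r0 * X r0 * (K * M) / (y d0 * Y d0) := by
          field_simp
  have hpieceQ : ∀ ε : ZMod 2, (∑ d ∈ Dd.filter (fun d => m r0 d = ε), y d * Y d) ^ 2
      ≤ y d0 * Y d0 * (K * M) / (x r0 * X r0) := by
    intro ε
    have hsub := Finset.filter_subset (fun d => m r0 d = ε) Dd
    have h1 := cs_aux (Dd.filter (fun d => m r0 d = ε)) y Y (y d0 * Y d0)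
      (fun d hd => hy d (hsub hd)) (fun d hd => hY d (hsub hd))
      (fun d hd => hdmax d (hsub hd)) (le_of_lt hsm)
    have h2 : (∑ d ∈ Dd.filter (fun d => m r0 d = ε), y d) ≤ K / x r0 := by
      rw [le_div_iff₀ hx0]
      calc (∑ d ∈ Dd.filter (fun d => m r0 d = ε), y d) * x r0
          = x r0 * ∑ d ∈ Dd.filter (fun d => m r0 d = ε), y d := by ring
        _ ≤ K := hcolK r0 hr0 ε
    have h3 : (∑ d ∈ Dd.filter (fun d => m r0 d = ε), Y d) ≤ M / X r0 := by
      rw [le_div_iff₀ hX0]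
      calc (∑ d ∈ Dd.filter (fun d => m r0 d = ε), Y d) * X r0
          = X r0 * ∑ d ∈ Dd.filter (fun d => m r0 d = ε), Y d := by ring
        _ ≤ M := hcolM r0 hr0 ε
    calc (∑ d ∈ Dd.filter (fun d => m r0 d = ε), y d * Y d) ^ 2
        ≤ y d0 * Y d0 * ((∑ d ∈ Dd.filter (fun d => m r0 d = ε), y d)
            * ∑ d ∈ Dd.filter (fun d => m r0 d = ε), Y d) := h1
      _ ≤ y d0 * Y d0 * (K / x r0 * (M / X r0)) := by
          refine mul_le_mul_of_nonneg_left ?_ (le_of_lt hsm)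
          exact mul_le_mul h2 h3 (Finset.sum_nonneg fun d hd => hY d (hsub hd)) (by positivity)
      _ = y d0 * Y d0 * (K * M) / (x r0 * X r0) := by
          field_simp
  have hPsq : P ^ 2 ≤ 4 * (x r0 * X r0 * (K * M) / (y d0 * Y d0)) := by
    have hsplit := Finset.sum_filter_add_sum_filter_not R (fun r => m r d0 = 0)
      (fun r => x r * X r)
    have hne : R.filter (fun r => ¬ m r d0 = 0) = R.filter (fun r => m r d0 = 1) :=
      Finset.filter_congr fun r _ => by rw [zmod_not_eq_zero_iff]
    have e0 := hpieceP 0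
    have e1 := hpieceP 1
    rw [hne] at hsplit
    rw [hP, ← hsplit]
    nlinarith [e0, e1, sq_nonneg ((∑ r ∈ R.filter (fun r => m r d0 = (0 : ZMod 2)), x r * X r)
      - ∑ r ∈ R.filter (fun r => m r d0 = (1 : ZMod 2)), x r * X r)]
  have hQsq : Q ^ 2 ≤ 4 * (y d0 * Y d0 * (K * M) / (x r0 * X r0)) := by
    have hsplit := Finset.sum_filter_add_sum_filter_not Dd (fun d => m r0 d = 0)
      (fun d => y d * Y d)
    have hne : Dd.filter (fun d => ¬ m r0 d = 0) = Dd.filter (fun d => m r0 d = 1) :=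
      Finset.filter_congr fun d _ => by rw [zmod_not_eq_zero_iff]
    have e0 := hpieceQ 0
    have e1 := hpieceQ 1
    rw [hne] at hsplit
    rw [hQ, ← hsplit]
    nlinarith [e0, e1, sq_nonneg ((∑ d ∈ Dd.filter (fun d => m r0 d = (0 : ZMod 2)), y d * Y d)
      - ∑ d ∈ Dd.filter (fun d => m r0 d = (1 : ZMod 2)), y d * Y d)]
  have hfin : (P * Q) ^ 2 ≤ (4 * (K * M)) ^ 2 := by
    have hmul := mul_le_mul hPsq hQsq (sq_nonneg Q) (by positivity)
    calc (P * Q) ^ 2 = P ^ 2 * Q ^ 2 := by ring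
      _ ≤ 4 * (x r0 * X r0 * (K * M) / (y d0 * Y d0))
          * (4 * (y d0 * Y d0 * (K * M) / (x r0 * X r0))) := hmul
      _ = (4 * (K * M)) ^ 2 := by
          field_simp
  exact le_of_pow_le_pow_left₀ two_ne_zero (by positivity) hfin

section Step

variable {α β γ δ : Type*} [DecidableEq α] [DecidableEq β] [DecidableEq γ] [DecidableEq δ]

def pr (S : Finset (α × γ)) : Finset α := S.image Prod.fst

def fib (S : Finset (α × γ)) (z : α) : Finset γ :=
  (S.filter fun p => p.1 = z).image Prod.snd

def rho (g : α → β → ZMod 2) (c : ZMod 2) (V : Finset β) (z : α) : β → ZMod 2 :=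
  fun w => if w ∈ V then c - g z w else 0

def gT (g : α → β → ZMod 2) : β → α → ZMod 2 := fun w z => g z w

variable [Fintype α] [Fintype β]

def RR (g : α → β → ZMod 2) (c : ZMod 2) (S : Finset (α × γ)) (T : Finset (β × δ)) :
    Finset (β → ZMod 2) := (pr S).image (rho g c (pr T))

def cls (g : α → β → ZMod 2) (c : ZMod 2) (S : Finset (α × γ)) (T : Finset (β × δ))
    (r : β → ZMod 2) : Finset α := (pr S).filter fun z => rho g c (pr T) z = r

def wt (g : α → β → ZMod 2) (c : ZMod 2) (S : Finset (α × γ)) (T : Finset (β × δ))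
    (r : β → ZMod 2) : ℕ := (cls g c S T r).sup fun z => (fib S z).card

noncomputable def mv (g : α → β → ZMod 2) (c : ZMod 2) (S : Finset (α × γ)) (T : Finset (β × δ))
    (r : β → ZMod 2) (d : α → ZMod 2) : ZMod 2 :=
  if h : ∃ w, w ∈ pr T ∧ rho (gT g) c (pr S) w = d then r h.choose else 0

lemma mem_fib {S : Finset (α × γ)} {z : α} {a : γ} : a ∈ fib S z ↔ (z, a) ∈ S := by
  constructor
  · intro h
    obtain ⟨p, hp, rfl⟩ := Finset.mem_image.1 h
    obtain ⟨hpS, hp1⟩ := Finset.mem_filter.1 hp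
    rwa [show z = p.1 from hp1.symm, Prod.mk.eta]
  · intro h
    exact Finset.mem_image.2 ⟨(z, a), Finset.mem_filter.2 ⟨h, rfl⟩, rfl⟩

lemma fib_nonempty {S : Finset (α × γ)} {z : α} (h : z ∈ pr S) : (fib S z).Nonempty := by
  obtain ⟨p, hp, rfl⟩ := Finset.mem_image.1 h
  exact ⟨p.2, mem_fib.2 (by rwa [Prod.mk.eta])⟩

lemma rho_apply_mem {g : α → β → ZMod 2} {c : ZMod 2} {V : Finset β} {z : α} {w : β}
    (h : w ∈ V) : rho g c V z w = c - g z w := if_pos h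

lemma fib_val {g : α → β → ZMod 2} {f' : γ → δ → ZMod 2} {c : ZMod 2}
    {S : Finset (α × γ)} {T : Finset (β × δ)}
    (hST : ∀ p ∈ S, ∀ q ∈ T, g p.1 q.1 + f' p.2 q.2 = c)
    {z : α} {a : γ} {w : β} {b : δ} (hS : (z, a) ∈ S) (hT : (w, b) ∈ T) :
    f' a b = rho g c (pr T) z w := by
  have hw : w ∈ pr T := Finset.mem_image_of_mem Prod.fst hT
  rw [rho_apply_mem hw]
  have h := hST (z, a) hS (w, b) hT
  linear_combination h

lemma mv_val {g : α → β → ZMod 2} {c : ZMod 2} {S : Finset (α × γ)} {T : Finset (β × δ)}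
    {r : β → ZMod 2} {d : α → ZMod 2} {z : α} {w : β}
    (hz : z ∈ pr S) (hw : w ∈ pr T) (hr : rho g c (pr T) z = r)
    (hd : rho (gT g) c (pr S) w = d) :
    mv g c S T r d = c - g z w := by
  have hex : ∃ w', w' ∈ pr T ∧ rho (gT g) c (pr S) w' = d := ⟨w, hw, hd⟩
  simp only [mv]
  rw [dif_pos hex]
  obtain ⟨hw', hd'⟩ := hex.choose_spec
  have h1 : r hex.choose = c - g z hex.choose := by
    rw [← hr, rho_apply_mem hw']
  have h2 : c - g z hex.choose = c - g z w := by
    have h3 := congrFun (hd'.trans hd.symm) z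
    rw [rho_apply_mem hz, rho_apply_mem hz] at h3
    simpa [gT] using h3
  rw [h1, h2]

lemma mv_symm {g : α → β → ZMod 2} {c : ZMod 2} {S : Finset (α × γ)} {T : Finset (β × δ)}
    {r : β → ZMod 2} {d : α → ZMod 2}
    (hr : r ∈ RR g c S T) (hd : d ∈ RR (gT g) c T S) :
    mv g c S T r d = mv (gT g) c T S d r := by
  obtain ⟨z, hz, hzr⟩ := Finset.mem_image.1 hr
  obtain ⟨w, hw, hwd⟩ := Finset.mem_image.1 hd
  rw [mv_val hz hw hzr hwd, mv_val (g := gT g) hw hz hwd hzr]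
  rfl

lemma count_le (g : α → β → ZMod 2) (c : ZMod 2) (S : Finset (α × γ)) (T : Finset (β × δ)) :
    S.card ≤ ∑ r ∈ RR g c S T, (cls g c S T r).card * wt g c S T r := by
  classical
  have h1 : S.card = ∑ z ∈ pr S, (fib S z).card := by
    rw [Finset.card_eq_sum_card_fiberwise (f := Prod.fst) (t := pr S)
      (fun p hp => Finset.mem_image_of_mem _ hp)]
    refine Finset.sum_congr rfl fun z hz => ?_
    unfold fib
    rw [Finset.card_image_of_injOn]
    intro p hp q hq hpq
    have hp' := (Finset.mem_filter.1 hp).2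
    have hq' := (Finset.mem_filter.1 hq).2
    exact Prod.ext (hp'.trans hq'.symm) hpq
  have h2 : ∑ z ∈ pr S, (fib S z).card =
      ∑ r ∈ RR g c S T, ∑ z ∈ (pr S).filter (fun z => rho g c (pr T) z = r), (fib S z).card :=
    (Finset.sum_fiberwise_of_maps_to (fun z hz => Finset.mem_image_of_mem _ hz) _).symm
  rw [h1, h2]
  refine Finset.sum_le_sum fun r hr => ?_
  have hle : ∀ z ∈ cls g c S T r, (fib S z).card ≤ wt g c S T r :=
    fun z hz => Finset.le_sup (f := fun z => (fib S z).card) hz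
  have := Finset.sum_le_card_nsmul (cls g c S T r) (fun z => (fib S z).card)
    (wt g c S T r) hle
  simpa [cls, smul_eq_mul] using this

lemma rowK (g : α → β → ZMod 2) (c : ZMod 2) (S : Finset (α × γ)) (T : Finset (β × δ)) (K : ℕ)
    (hK : ∀ (U : Finset α) (V : Finset β) (c' : ZMod 2),
      (∀ z ∈ U, ∀ w ∈ V, g z w = c') → U.card * V.card ≤ K) :
    ∀ d ∈ RR (gT g) c T S, ∀ ε : ZMod 2,
      (∑ r ∈ (RR g c S T).filter (fun r => mv g c S T r d = ε), (cls g c S T r).card)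
        * (cls (gT g) c T S d).card ≤ K := by
  classical
  intro d hd ε
  obtain ⟨w0, hw0, hwd⟩ := Finset.mem_image.1 hd
  set U := (pr S).filter (fun z => rho g c (pr T) z w0 = ε) with hUdef
  have hsum : (∑ r ∈ (RR g c S T).filter (fun r => mv g c S T r d = ε),
      (cls g c S T r).card) = U.card := by
    rw [Finset.card_eq_sum_card_fiberwise (f := rho g c (pr T))
      (t := (RR g c S T).filter (fun r => mv g c S T r d = ε)) ?_]
    · refine Finset.sum_congr rfl fun r hr => ?_
      obtain ⟨hr1, hr2⟩ := Finset.mem_filter.1 hr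
      congr 1
      apply Finset.ext
      intro z
      constructor
      · intro hzc
        obtain ⟨hz1, hz2⟩ := Finset.mem_filter.1 hzc
        refine Finset.mem_filter.2 ⟨Finset.mem_filter.2 ⟨hz1, ?_⟩, hz2⟩
        rw [rho_apply_mem hw0, ← mv_val hz1 hw0 hz2 hwd]
        exact hr2
      · intro hzU
        obtain ⟨hzU1, hz2⟩ := Finset.mem_filter.1 hzU
        obtain ⟨hz1, -⟩ := Finset.mem_filter.1 hzU1
        exact Finset.mem_filter.2 ⟨hz1, hz2⟩
    · intro z hz
      obtain ⟨hz1, hz2⟩ := Finset.mem_filter.1 hz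
      refine Finset.mem_filter.2 ⟨Finset.mem_image_of_mem _ hz1, ?_⟩
      rw [mv_val hz1 hw0 rfl hwd, ← rho_apply_mem (g := g) (c := c) hw0]
      exact hz2
  rw [hsum]
  apply hK U (cls (gT g) c T S d) (c - ε)
  intro z hz w hw
  obtain ⟨hz1, hz2⟩ := Finset.mem_filter.1 hz
  obtain ⟨hw1, hw2⟩ := Finset.mem_filter.1 hw
  have h3 := congrFun (hw2.trans hwd.symm) z
  rw [rho_apply_mem hz1, rho_apply_mem hz1] at h3
  simp only [gT] at h3
  rw [rho_apply_mem hw0] at hz2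
  linear_combination -h3 - hz2

lemma rowM (g : α → β → ZMod 2) (f' : γ → δ → ZMod 2) (c : ZMod 2)
    (S : Finset (α × γ)) (T : Finset (β × δ)) (hS : S.Nonempty)
    (hST : ∀ p ∈ S, ∀ q ∈ T, g p.1 q.1 + f' p.2 q.2 = c) (M : ℕ)
    (hM : ∀ (A : Finset γ) (B : Finset δ) (c' : ZMod 2),
      (∀ a ∈ A, ∀ b ∈ B, f' a b = c') → A.card * B.card ≤ M) :
    ∀ d ∈ RR (gT g) c T S, ∀ ε : ZMod 2,
      (∑ r ∈ (RR g c S T).filter (fun r => mv g c S T r d = ε), wt g c S T r)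
        * wt (gT g) c T S d ≤ M := by
  classical
  intro d hd ε
  obtain ⟨w0, hw0, hwd⟩ := Finset.mem_image.1 hd
  have hdne : (cls (gT g) c T S d).Nonempty := ⟨w0, Finset.mem_filter.2 ⟨hw0, hwd⟩⟩
  obtain ⟨w1, hw1, hbw1⟩ := Finset.exists_mem_eq_sup (cls (gT g) c T S d) hdne
    (fun w => (fib T w).card)
  have hbw1' : wt (gT g) c T S d = (fib T w1).card := hbw1
  have hw1T : w1 ∈ pr T := (Finset.mem_filter.1 hw1).1
  have hw1d : rho (gT g) c (pr S) w1 = d := (Finset.mem_filter.1 hw1).2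
  have hne : Nonempty α := ⟨hS.choose.1⟩
  have hrep : ∀ r : β → ZMod 2, ∃ z : α,
      r ∈ RR g c S T → z ∈ cls g c S T r ∧ wt g c S T r = (fib S z).card := by
    intro r
    by_cases hr : r ∈ RR g c S T
    · obtain ⟨z0, hz0, hz0r⟩ := Finset.mem_image.1 hr
      have hcne : (cls g c S T r).Nonempty := ⟨z0, Finset.mem_filter.2 ⟨hz0, hz0r⟩⟩
      obtain ⟨z, hz, hzs⟩ := Finset.exists_mem_eq_sup _ hcne (fun z => (fib S z).card)
      exact ⟨z, fun _ => ⟨hz, hzs⟩⟩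
    · exact ⟨hne.some, fun h => absurd h hr⟩
  choose zr hzr using hrep
  set F := (RR g c S T).filter (fun r => mv g c S T r d = ε) with hF
  have hmemF : ∀ r ∈ F, r ∈ RR g c S T := fun r hr => (Finset.mem_filter.1 hr).1
  have hdisj : ∀ r ∈ F, ∀ r' ∈ F, r ≠ r' → Disjoint (fib S (zr r)) (fib S (zr r')) := by
    intro r hr r' hr' hneq
    rw [Finset.disjoint_left]
    intro a ha ha'
    apply hneq
    have h1 := (hzr r (hmemF r hr)).1
    have h2 := (hzr r' (hmemF r' hr')).1
    have hzr1 : rho g c (pr T) (zr r) = r := (Finset.mem_filter.1 h1).2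
    have hzr2 : rho g c (pr T) (zr r') = r' := (Finset.mem_filter.1 h2).2
    rw [← hzr1, ← hzr2]
    funext w
    by_cases hw : w ∈ pr T
    · rw [rho_apply_mem hw, rho_apply_mem hw]
      obtain ⟨b, hb⟩ := fib_nonempty hw
      have e1 := fib_val hST (mem_fib.1 ha) (mem_fib.1 hb)
      have e2 := fib_val hST (mem_fib.1 ha') (mem_fib.1 hb)
      rw [rho_apply_mem hw] at e1 e2
      rw [← e1, ← e2]
    · simp [rho, hw]
  have hcardW : (F.biUnion (fun r => fib S (zr r))).card = ∑ r ∈ F, wt g c S T r := by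
    rw [Finset.card_biUnion hdisj]
    exact Finset.sum_congr rfl fun r hr => ((hzr r (hmemF r hr)).2).symm
  have hmono : ∀ a ∈ F.biUnion (fun r => fib S (zr r)), ∀ b ∈ fib T w1, f' a b = ε := by
    intro a ha b hb
    obtain ⟨r, hrF, haz⟩ := Finset.mem_biUnion.1 ha
    have h1 := (hzr r (hmemF r hrF)).1
    have hz1 : zr r ∈ pr S := (Finset.mem_filter.1 h1).1
    have hzr1 : rho g c (pr T) (zr r) = r := (Finset.mem_filter.1 h1).2
    have e1 := fib_val hST (mem_fib.1 haz) (mem_fib.1 hb)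
    rw [rho_apply_mem hw1T] at e1
    have e2 := mv_val hz1 hw1T hzr1 hw1d
    have e3 : mv g c S T r d = ε := (Finset.mem_filter.1 hrF).2
    rw [e1, ← e2, e3]
  have hfin := hM _ _ ε hmono
  calc (∑ r ∈ F, wt g c S T r) * wt (gT g) c T S d
      = (F.biUnion (fun r => fib S (zr r))).card * (fib T w1).card := by
        rw [hcardW, hbw1']
    _ ≤ M := hfin

end Step


section StepMain

variable {α β γ δ : Type*} [DecidableEq α] [DecidableEq β] [DecidableEq γ] [DecidableEq δ]
  [Fintype α] [Fintype β]

lemma step (g : α → β → ZMod 2) (f : γ → δ → ZMod 2) (c : ZMod 2)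
    (S : Finset (α × γ)) (T : Finset (β × δ))
    (hST : ∀ p ∈ S, ∀ q ∈ T, g p.1 q.1 + f p.2 q.2 = c)
    (K M : ℕ)
    (hK : ∀ (U : Finset α) (V : Finset β) (c' : ZMod 2),
      (∀ z ∈ U, ∀ w ∈ V, g z w = c') → U.card * V.card ≤ K)
    (hM : ∀ (A : Finset γ) (B : Finset δ) (c' : ZMod 2),
      (∀ a ∈ A, ∀ b ∈ B, f a b = c') → A.card * B.card ≤ M) :
    S.card * T.card ≤ 4 * (K * M) := by
  classical
  rcases S.eq_empty_or_nonempty with rfl | hS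
  · simp
  rcases T.eq_empty_or_nonempty with rfl | hT
  · simp
  have hTS : ∀ p ∈ T, ∀ q ∈ S, gT g p.1 q.1 + gT f p.2 q.2 = c := fun p hp q hq => hST q hq p hp
  have hK' : ∀ (V : Finset β) (U : Finset α) (c' : ZMod 2),
      (∀ w ∈ V, ∀ z ∈ U, gT g w z = c') → V.card * U.card ≤ K := by
    intro V U c' h
    rw [mul_comm]
    exact hK U V c' fun z hz w hw => h w hw z hz
  have hM' : ∀ (B : Finset δ) (A : Finset γ) (c' : ZMod 2),
      (∀ b ∈ B, ∀ a ∈ A, gT f b a = c') → B.card * A.card ≤ M := by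
    intro B A c' h
    rw [mul_comm]
    exact hM A B c' fun a ha b hb => h b hb a ha
  have habs := abstract_bound (RR g c S T) (RR (gT g) c T S) (mv g c S T)
      (fun r => ((cls g c S T r).card : ℝ)) (fun r => (wt g c S T r : ℝ))
      (fun d => ((cls (gT g) c T S d).card : ℝ)) (fun d => (wt (gT g) c T S d : ℝ))
      (K : ℝ) (M : ℝ)
      (fun r _ => Nat.cast_nonneg _) (fun r _ => Nat.cast_nonneg _)
      (fun d _ => Nat.cast_nonneg _) (fun d _ => Nat.cast_nonneg _)
      (Nat.cast_nonneg _) (Nat.cast_nonneg _)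
      (fun d hd ε => by beta_reduce; exact_mod_cast rowK g c S T K hK d hd ε)
      (fun d hd ε => by beta_reduce; exact_mod_cast rowM g f c S T hS hST M hM d hd ε)
      (fun r hr ε => by
        have h0 := rowK (gT g) c T S K hK' r hr ε
        have h1 : (∑ d ∈ (RR (gT g) c T S).filter (fun d => mv (gT g) c T S d r = ε),
            (cls (gT g) c T S d).card) * (cls g c S T r).card ≤ K := h0
        have hfe : (RR (gT g) c T S).filter (fun d => mv (gT g) c T S d r = ε)
            = (RR (gT g) c T S).filter (fun d => mv g c S T r d = ε) := by
          refine Finset.filter_congr fun d hd => ?_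
          rw [mv_symm hr hd]
        rw [hfe, mul_comm] at h1
        beta_reduce
        exact_mod_cast h1)
      (fun r hr ε => by
        have h0 := rowM (gT g) (gT f) c T S hT hTS M hM' r hr ε
        have h1 : (∑ d ∈ (RR (gT g) c T S).filter (fun d => mv (gT g) c T S d r = ε),
            wt (gT g) c T S d) * wt g c S T r ≤ M := h0
        have hfe : (RR (gT g) c T S).filter (fun d => mv (gT g) c T S d r = ε)
            = (RR (gT g) c T S).filter (fun d => mv g c S T r d = ε) := by
          refine Finset.filter_congr fun d hd => ?_
          rw [mv_symm hr hd]
        rw [hfe, mul_comm] at h1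
        beta_reduce
        exact_mod_cast h1)
  have hPc : (S.card : ℝ) ≤ ∑ r ∈ RR g c S T,
      ((cls g c S T r).card : ℝ) * (wt g c S T r : ℝ) := by
    exact_mod_cast count_le g c S T
  have hQc : (T.card : ℝ) ≤ ∑ d ∈ RR (gT g) c T S,
      ((cls (gT g) c T S d).card : ℝ) * (wt (gT g) c T S d : ℝ) := by
    exact_mod_cast count_le (gT g) c T S
  have hfinal : ((S.card * T.card : ℕ) : ℝ) ≤ ((4 * (K * M) : ℕ) : ℝ) := by
    push_cast
    calc (S.card : ℝ) * (T.card : ℝ)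
        ≤ (∑ r ∈ RR g c S T, ((cls g c S T r).card : ℝ) * (wt g c S T r : ℝ))
          * ∑ d ∈ RR (gT g) c T S, ((cls (gT g) c T S d).card : ℝ) * (wt (gT g) c T S d : ℝ) :=
          mul_le_mul hPc hQc (Nat.cast_nonneg _) (le_trans (Nat.cast_nonneg _) hPc)
      _ ≤ 4 * ((K : ℝ) * (M : ℝ)) := habs
  exact_mod_cast hfinal

end StepMain

section Main

variable {𝒳 𝒴 : Type*} [Fintype 𝒳] [Fintype 𝒴] [DecidableEq 𝒳] [DecidableEq 𝒴]

open Classical in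
noncomputable def Mrect (f : 𝒳 → 𝒴 → ZMod 2) : ℕ :=
  ((Finset.univ : Finset (Finset 𝒳 × Finset 𝒴)).filter
    (fun p => ∃ c : ZMod 2, ∀ x ∈ p.1, ∀ y ∈ p.2, f x y = c)).sup
    (fun p => p.1.card * p.2.card)

open Classical in
lemma le_Mrect (f : 𝒳 → 𝒴 → ZMod 2) (A : Finset 𝒳) (B : Finset 𝒴) (c : ZMod 2)
    (h : ∀ x ∈ A, ∀ y ∈ B, f x y = c) : A.card * B.card ≤ Mrect f := by
  have hmem : (A, B) ∈ (Finset.univ : Finset (Finset 𝒳 × Finset 𝒴)).filter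
      (fun p => ∃ c : ZMod 2, ∀ x ∈ p.1, ∀ y ∈ p.2, f x y = c) :=
    Finset.mem_filter.2 ⟨Finset.mem_univ _, ⟨c, h⟩⟩
  exact Finset.le_sup (f := fun p : Finset 𝒳 × Finset 𝒴 => p.1.card * p.2.card) hmem

open Classical in
lemma Mrect_exists (f : 𝒳 → 𝒴 → ZMod 2) :
    ∃ (A : Finset 𝒳) (B : Finset 𝒴) (c : ZMod 2),
      (∀ x ∈ A, ∀ y ∈ B, f x y = c) ∧ A.card * B.card = Mrect f := by
  have hne : (((Finset.univ : Finset (Finset 𝒳 × Finset 𝒴)).filter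
      (fun p => ∃ c : ZMod 2, ∀ x ∈ p.1, ∀ y ∈ p.2, f x y = c))).Nonempty := by
    refine ⟨(∅, ∅), Finset.mem_filter.2 ⟨Finset.mem_univ _, ⟨0, ?_⟩⟩⟩
    simp
  obtain ⟨p, hp, hsup⟩ := Finset.exists_mem_eq_sup _ hne
    (fun p : Finset 𝒳 × Finset 𝒴 => p.1.card * p.2.card)
  obtain ⟨-, c, hc⟩ := Finset.mem_filter.1 hp
  exact ⟨p.1, p.2, c, hc, hsup.symm⟩

lemma pairing_injective {κ : Type*} {n : ℕ} :
    Function.Injective (fun x : Fin (n + 1) → κ => ((Fin.tail x, x 0) : (Fin n → κ) × κ)) := by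
  intro x x' h
  have h1 : Fin.tail x = Fin.tail x' := congrArg Prod.fst h
  have h2 : x 0 = x' 0 := congrArg Prod.snd h
  rw [← Fin.cons_self_tail x, ← Fin.cons_self_tail x', h1, h2]

lemma pow_bound (f : 𝒳 → 𝒴 → ZMod 2) :
    ∀ (n : ℕ) (S : Finset (Fin (n + 1) → 𝒳)) (T : Finset (Fin (n + 1) → 𝒴)) (c : ZMod 2),
      (∀ x ∈ S, ∀ y ∈ T, ∑ i, f (x i) (y i) = c) →
      S.card * T.card ≤ 4 ^ n * Mrect f ^ (n + 1) := by
  intro n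
  induction n with
  | zero =>
    intro S T c h
    have hcardS : (S.image (fun x => x 0)).card = S.card :=
      Finset.card_image_of_injective _ (fun x x' hxx => funext fun i => by
        rw [Fin.eq_zero i]; exact hxx)
    have hcardT : (T.image (fun y => y 0)).card = T.card :=
      Finset.card_image_of_injective _ (fun y y' hyy => funext fun i => by
        rw [Fin.eq_zero i]; exact hyy)
    have hmono : ∀ a ∈ S.image (fun x => x 0), ∀ b ∈ T.image (fun y => y 0), f a b = c := by
      intro a ha b hb
      obtain ⟨x, hx, rfl⟩ := Finset.mem_image.1 ha
      obtain ⟨y, hy, rfl⟩ := Finset.mem_image.1 hb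
      have := h x hx y hy
      rwa [Fin.sum_univ_one] at this
    have := le_Mrect f _ _ c hmono
    rw [hcardS, hcardT] at this
    simpa using this
  | succ n ih =>
    intro S T c h
    set S2 := S.image (fun x => ((Fin.tail x, x 0) : (Fin (n + 1) → 𝒳) × 𝒳)) with hS2
    set T2 := T.image (fun y => ((Fin.tail y, y 0) : (Fin (n + 1) → 𝒴) × 𝒴)) with hT2
    have hcS : S2.card = S.card := Finset.card_image_of_injective _ pairing_injective
    have hcT : T2.card = T.card := Finset.card_image_of_injective _ pairing_injective
    have hST : ∀ p ∈ S2, ∀ q ∈ T2,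
        (∑ i, f (p.1 i) (q.1 i)) + f p.2 q.2 = c := by
      intro p hp q hq
      obtain ⟨x, hx, rfl⟩ := Finset.mem_image.1 hp
      obtain ⟨y, hy, rfl⟩ := Finset.mem_image.1 hq
      have hxy := h x hx y hy
      rw [Fin.sum_univ_succ] at hxy
      rw [add_comm]
      exact hxy
    have hstep := step (fun z w => ∑ i, f (z i) (w i)) f c S2 T2 hST
      (4 ^ n * Mrect f ^ (n + 1)) (Mrect f)
      (fun U V c' hUV => ih U V c' hUV)
      (fun A B c' hAB => le_Mrect f A B c' hAB)
    rw [hcS, hcT] at hstep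
    calc S.card * T.card ≤ 4 * (4 ^ n * Mrect f ^ (n + 1) * Mrect f) := hstep
      _ = 4 ^ (n + 1) * Mrect f ^ (n + 2) := by ring

end Main

end XorLiftProof

open XorLiftProof in
/-- If `f^{⊕n}` has a monochromatic rectangle of size at least `2^k`, then `f` has a
monochromatic rectangle of size at least `2^{k/n − 2}`.  Here `f : 𝒳 → 𝒴 → ZMod 2` and
`f^{⊕n}(x, y) = Σ_i f(x_i, y_i)` in `ZMod 2`. -/
theorem xor_lift_mono_rectangle {𝒳 𝒴 : Type*} [Fintype 𝒳] [Fintype 𝒴]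
    [DecidableEq 𝒳] [DecidableEq 𝒴] (f : 𝒳 → 𝒴 → ZMod 2) {n : ℕ} (hn : 0 < n) (k : ℝ)
    (S : Finset (Fin n → 𝒳)) (T : Finset (Fin n → 𝒴))
    (hmono : ∃ c : ZMod 2, ∀ x ∈ S, ∀ y ∈ T, (∑ i, f (x i) (y i)) = c)
    (hsize : (2 : ℝ) ^ k ≤ (S.card * T.card : ℝ)) :
    ∃ (A : Finset 𝒳) (B : Finset 𝒴) (c : ZMod 2),
      (∀ x ∈ A, ∀ y ∈ B, f x y = c) ∧
      (2 : ℝ) ^ (k / n - 2) ≤ (A.card * B.card : ℝ) := by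
  obtain ⟨m, rfl⟩ : ∃ m, n = m + 1 := ⟨n - 1, (Nat.succ_pred_eq_of_pos hn).symm⟩
  obtain ⟨c, hc⟩ := hmono
  have hbound := pow_bound f m S T c hc
  have hchain : (2 : ℝ) ^ k ≤ (4 * (Mrect f : ℝ)) ^ (m + 1) := by
    have h1 : (S.card * T.card : ℝ) ≤ 4 ^ m * (Mrect f : ℝ) ^ (m + 1) := by
      exact_mod_cast hbound
    have h2 : (4 : ℝ) ^ m * (Mrect f : ℝ) ^ (m + 1) ≤ (4 * (Mrect f : ℝ)) ^ (m + 1) := by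
      rw [mul_pow]
      refine mul_le_mul_of_nonneg_right ?_ (by positivity)
      exact pow_le_pow_right₀ (by norm_num) (Nat.le_succ m)
    calc (2 : ℝ) ^ k ≤ (S.card * T.card : ℝ) := hsize
      _ ≤ 4 ^ m * (Mrect f : ℝ) ^ (m + 1) := h1
      _ ≤ (4 * (Mrect f : ℝ)) ^ (m + 1) := h2
  have h4μ : 0 < 4 * (Mrect f : ℝ) := by
    by_contra hcon
    push_neg at hcon
    have h0 : 4 * (Mrect f : ℝ) = 0 := le_antisymm hcon (by positivity)
    have hz : ((4 * (Mrect f : ℝ)) ^ (m + 1) : ℝ) = 0 := by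
      rw [h0]; simp
    have := lt_of_lt_of_le (Real.rpow_pos_of_pos two_pos k) hchain
    rw [hz] at this
    exact lt_irrefl 0 this
  have hnat : ((m + 1 : ℕ) : ℝ) ≠ 0 := by positivity
  have h1 : ((2 : ℝ) ^ k) ^ (((m + 1 : ℕ) : ℝ)⁻¹) ≤
      ((4 * (Mrect f : ℝ)) ^ (m + 1)) ^ (((m + 1 : ℕ) : ℝ)⁻¹) :=
    Real.rpow_le_rpow (Real.rpow_pos_of_pos two_pos k).le hchain (by positivity)
  have h2 : ((2 : ℝ) ^ k) ^ (((m + 1 : ℕ) : ℝ)⁻¹) = (2 : ℝ) ^ (k / ((m + 1 : ℕ) : ℝ)) := by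
    rw [← Real.rpow_mul (by norm_num : (0:ℝ) ≤ 2), div_eq_mul_inv]
  have h3 : (((4 * (Mrect f : ℝ)) ^ (m + 1) : ℝ)) ^ (((m + 1 : ℕ) : ℝ)⁻¹)
      = 4 * (Mrect f : ℝ) := by
    rw [← Real.rpow_natCast (4 * (Mrect f : ℝ)) (m + 1), ← Real.rpow_mul h4μ.le,
      mul_inv_cancel₀ hnat, Real.rpow_one]
  rw [h2, h3] at h1
  have h22 : (2 : ℝ) ^ (2 : ℝ) = 4 := by
    have h := Real.rpow_natCast (2 : ℝ) 2
    have h' : ((2 : ℕ) : ℝ) = (2 : ℝ) := by norm_num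
    rw [h'] at h
    rw [h]
    norm_num
  have h5 : (2 : ℝ) ^ (k / ((m + 1 : ℕ) : ℝ) - 2) =
      (2 : ℝ) ^ (k / ((m + 1 : ℕ) : ℝ)) / 4 := by
    rw [Real.rpow_sub two_pos, h22]
  obtain ⟨A, B, c0, hAB, hABcard⟩ := Mrect_exists f
  refine ⟨A, B, c0, hAB, ?_⟩
  rw [h5]
  have hle : (2 : ℝ) ^ (k / ((m + 1 : ℕ) : ℝ)) / 4 ≤ (Mrect f : ℝ) := by linarith
  refine le_trans hle ?_
  exact_mod_cast le_of_eq hABcard.symm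
end

section
/- If a rank-1 block R occupies the top-left of M = [[R, A], [B, Z]] over ℝ and rk(M) = r, then either rk([R A]) ≤ (r + 3)/2 or rk([R; B]) ≤ (r + 3)/2. -/
open Matrix LinearMap FiniteDimensional

/-- Rank-nullity for a map restricted to a submodule. -/
lemma aux_finrank_map {V W : Type*} [AddCommGroup V] [Module ℝ V]
    [AddCommGroup W] [Module ℝ W] [FiniteDimensional ℝ V]
    (p : V →ₗ[ℝ] W) (S : Submodule ℝ V) :
    Module.finrank ℝ (S.map p) + Module.finrank ℝ ((LinearMap.ker p) ⊓ S : Submodule ℝ V)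
      = Module.finrank ℝ S := by
  have h := LinearMap.finrank_range_add_finrank_ker (p.domRestrict S)
  rw [LinearMap.range_domRestrict, LinearMap.ker_domRestrict] at h
  have e : ((LinearMap.ker p).comap S.subtype) ≃ₗ[ℝ]
      ((LinearMap.ker p ⊓ S : Submodule ℝ V)) := by
    have h1 : (LinearMap.ker p).comap S.subtype
        = (LinearMap.ker p ⊓ S).comap S.subtype := by
      ext x; simp [Submodule.mem_comap, x.2]
    rw [h1]
    exact Submodule.comapSubtypeEquivOfLe inf_le_right
  rw [← h, e.finrank_eq]

/-- Frobenius-style rank inequality at the linear-map level. -/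
lemma aux_frobenius {U V W : Type*} [AddCommGroup U] [Module ℝ U]
    [AddCommGroup V] [Module ℝ V] [AddCommGroup W] [Module ℝ W]
    [FiniteDimensional ℝ V]
    (f : U →ₗ[ℝ] V) (p : V →ₗ[ℝ] W) (S : Submodule ℝ U) :
    Module.finrank ℝ ((LinearMap.range f).map p) + Module.finrank ℝ ((S.map f).map p)
      + Module.finrank ℝ (S.map f)
      ≤ Module.finrank ℝ (LinearMap.range f)
      + Module.finrank ℝ ((S.map f).map p) + Module.finrank ℝ ((S.map f).map p) := by
  have h1 := aux_finrank_map p (LinearMap.range f)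
  have h2 := aux_finrank_map p (S.map f)
  have hle : Module.finrank ℝ ((LinearMap.ker p ⊓ S.map f : Submodule ℝ V))
      ≤ Module.finrank ℝ ((LinearMap.ker p ⊓ LinearMap.range f : Submodule ℝ V)) := by
    apply Submodule.finrank_mono
    exact inf_le_inf_left _ (LinearMap.map_le_range)
  omega

/-- If a rank-1 block `R` occupies the top-left of `M = [[R, A], [B, Z]]` over `ℝ` and
`rk(M) = r`, then `rk([R A]) ≤ (r + 3)/2` or `rk([R; B]) ≤ (r + 3)/2`. -/
theorem rank_row_or_column_small {m₁ m₂ n₁ n₂ : ℕ}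
    (R : Matrix (Fin m₁) (Fin n₁) ℝ) (A : Matrix (Fin m₁) (Fin n₂) ℝ)
    (B : Matrix (Fin m₂) (Fin n₁) ℝ) (Z : Matrix (Fin m₂) (Fin n₂) ℝ)
    (hR : R.rank ≤ 1) (r : ℕ) (hr : (Matrix.fromBlocks R A B Z).rank = r) :
    ((Matrix.fromCols R A).rank : ℝ) ≤ (r + 3) / 2 ∨
    ((Matrix.fromRows R B).rank : ℝ) ≤ (r + 3) / 2 := by
  -- linear maps
  set M := Matrix.fromBlocks R A B Z
  let f : ((Fin n₁ ⊕ Fin n₂) → ℝ) →ₗ[ℝ] ((Fin m₁ ⊕ Fin m₂) → ℝ) := M.mulVecLin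
  let p : ((Fin m₁ ⊕ Fin m₂) → ℝ) →ₗ[ℝ] (Fin m₁ → ℝ) := LinearMap.funLeft ℝ ℝ Sum.inl
  let e : (Fin n₁ → ℝ) →ₗ[ℝ] ((Fin n₁ ⊕ Fin n₂) → ℝ) :=
    { toFun := fun y => Sum.elim y 0
      map_add' := fun x y => by funext i; cases i <;> simp
      map_smul' := fun c x => by funext i; cases i <;> simp }
  have hcol : (Matrix.fromCols R A).mulVecLin = p.comp f := by
    apply LinearMap.ext
    intro x
    have hx : x = Sum.elim (x ∘ Sum.inl) (x ∘ Sum.inr) := by funext i; cases i <;> rfl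
    simp only [mulVecLin_apply, LinearMap.comp_apply]
    conv_lhs => rw [hx]
    rw [Matrix.fromCols_mulVec_sumElim]
    funext i
    simp [f, p, M, Matrix.fromBlocks_mulVec, LinearMap.funLeft]
  have hrow : (Matrix.fromRows R B).mulVecLin = f.comp e := by
    apply LinearMap.ext
    intro y
    funext i
    cases i <;> simp [f, e, M, Matrix.fromBlocks_mulVec]
  have hRmap : R.mulVecLin = (p.comp f).comp e := by
    rw [← hcol]
    apply LinearMap.ext
    intro y
    funext i
    simp [e, Matrix.fromCols_mulVec_sumElim]
  -- ranks as finranks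
  have key := aux_frobenius f p (LinearMap.range e)
  have h1 : (Matrix.fromCols R A).rank
      = Module.finrank ℝ ((LinearMap.range f).map p) := by
    rw [Matrix.rank, hcol, LinearMap.range_comp]
  have h2 : (Matrix.fromRows R B).rank
      = Module.finrank ℝ ((LinearMap.range e).map f) := by
    rw [Matrix.rank, hrow, LinearMap.range_comp]
  have h3 : R.rank = Module.finrank ℝ (((LinearMap.range e).map f).map p) := by
    rw [Matrix.rank, hRmap, LinearMap.range_comp, Submodule.map_comp]
  have h4 : Module.finrank ℝ (LinearMap.range f) = r := hr
  -- sum bound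
  have hsum : (Matrix.fromCols R A).rank + (Matrix.fromRows R B).rank ≤ r + 1 := by
    rw [h1, h2]
    rw [h3] at hR
    omega
  by_contra hcon
  push_neg at hcon
  obtain ⟨hc1, hc2⟩ := hcon
  have : ((Matrix.fromCols R A).rank : ℝ) + ((Matrix.fromRows R B).rank : ℝ) ≤ r + 1 := by
    exact_mod_cast hsum
  linarith
end
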